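/- arXiv:2011.12751 — 5 statements merged into one kernel-verified Lean document; each statement's English description precedes it below -/
import Mathlib

section
/- Telescoping weight identity: for discrete random variables A, X, M₁,...,M_k with strictly positive relevant conditional probabilities, and fixed values a₁,...,a_k of A, one has [π_k(a_k | X, M̄_k) / π₀(a_k | X)] · ∏_{j=1}^{k-1} [f_j(M_j | X, a_j, M̄_{j-1}) / f_j(M_j | X, a_k, M̄_{j-1})] = ∏_{j=1}^{k} [π_j(a_j | X, M̄_j) / π_{j-1}(a_j | X, M̄_{j-1})] almost surely, where π_j(a | x, m̄_j) = P(A = a | X = x, M̄_j = m̄_j) and f_j(m | x, a, m̄_{j-1}) = P(M_j = m | X = x, A = a, M̄_{j-1} = m̄_{j-1}). -/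
open Finset

variable {Ω : Type*}

/-- Probability of the event `s` under the weight function `w` on a finite sample space. -/
noncomputable def Pr [Fintype Ω] (w : Ω → ℝ) (s : Set Ω) : ℝ :=
  ∑ ω, Set.indicator s w ω

/-- Conditional probability of `s` given `t`. -/
noncomputable def cPr [Fintype Ω] (w : Ω → ℝ) (s t : Set Ω) : ℝ :=
  Pr w (s ∩ t) / Pr w t

/-- Conditional expectation of `Y` given the event `t`. -/
noncomputable def cExp [Fintype Ω] (w : Ω → ℝ) (Y : Ω → ℝ) (t : Set Ω) : ℝ :=
  (∑ ω, Set.indicator t (fun ω' => w ω' * Y ω') ω) / Pr w t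

/-- `π_j(a | X, M̄_j)`: conditional probability of treatment value `a` given the
covariates and the first `j` mediators (mediators are indexed `1, …, K`),
evaluated at the random point `ω`. -/
noncomputable def piProb [Fintype Ω] {χ α γ : Type*} (w : Ω → ℝ) (X : Ω → χ) (A : Ω → α)
    (M : ℕ → Ω → γ) (j : ℕ) (a : α) (ω : Ω) : ℝ :=
  cPr w {ω' | A ω' = a} {ω' | X ω' = X ω ∧ ∀ i ∈ Finset.Icc 1 j, M i ω' = M i ω}

/-- `f_j(M_j | X, a, M̄_{j-1})`: conditional probability of the `j`-th mediator value
given the covariates, treatment value `a`, and the first `j-1` mediators,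
evaluated at the random point `ω`. -/
noncomputable def fProb [Fintype Ω] {χ α γ : Type*} (w : Ω → ℝ) (X : Ω → χ) (A : Ω → α)
    (M : ℕ → Ω → γ) (j : ℕ) (a : α) (ω : Ω) : ℝ :=
  cPr w {ω' | M j ω' = M j ω}
    {ω' | X ω' = X ω ∧ A ω' = a ∧ ∀ i ∈ Finset.Icc 1 (j - 1), M i ω' = M i ω}

lemma Pr_nonneg [Fintype Ω] (w : Ω → ℝ) (hw : ∀ ω, 0 ≤ w ω) (s : Set Ω) : 0 ≤ Pr w s :=
  Finset.sum_nonneg fun ω _ => Set.indicator_nonneg (fun ω' _ => hw ω') ω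

lemma telescope_ratio (g : ℕ → ℝ) : ∀ n, (∀ j ≤ n, g j ≠ 0) →
    ∏ j ∈ Finset.Icc 1 n, g j / g (j - 1) = g n / g 0
  | 0, h => by simp [div_self (h 0 le_rfl)]
  | (n+1), h => by
    rw [Finset.prod_Icc_succ_top (by omega), telescope_ratio g n (fun j hj => h j (by omega))]
    simp only [Nat.add_sub_cancel]
    have h0 := h 0 (by omega)
    have hn := h n (by omega)
    field_simp

/-- Telescoping weight identity: the mediator-density-ratio weight equals the product
of treatment odds ratios. -/
theorem telescoping_weight_identity [Fintype Ω] {χ γ : Type*}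
    (w : Ω → ℝ) (hw : ∀ ω, 0 ≤ w ω) (hw1 : ∑ ω, w ω = 1)
    (X : Ω → χ) (A : Ω → Bool) (M : ℕ → Ω → γ) (K : ℕ) (a : ℕ → Bool)
    (k : ℕ) (hk1 : 1 ≤ k) (hkK : k ≤ K)
    (hπ : ∀ j ≤ K, ∀ (b : Bool) (ω : Ω), 0 < piProb w X A M j b ω)
    (hf : ∀ j, 1 ≤ j → j ≤ K → ∀ (b : Bool) (ω : Ω), 0 < fProb w X A M j b ω) :
    ∀ ω : Ω,
      (piProb w X A M k (a k) ω / piProb w X A M 0 (a k) ω) *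
        ∏ j ∈ Finset.Icc 1 (k - 1), fProb w X A M j (a j) ω / fProb w X A M j (a k) ω
      = ∏ j ∈ Finset.Icc 1 k, piProb w X A M j (a j) ω / piProb w X A M (j - 1) (a j) ω := by
  intro ω
  set b := a k with hb
  set T : ℕ → Set Ω := fun j => {ω' | X ω' = X ω ∧ ∀ i ∈ Finset.Icc 1 j, M i ω' = M i ω}
    with hT
  have hpi : ∀ (j : ℕ) (c : Bool), piProb w X A M j c ω
      = Pr w ({ω' | A ω' = c} ∩ T j) / Pr w (T j) := fun j c => rfl
  -- Express fProb in terms of the probabilities of {A = c} ∩ T j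
  have hfr : ∀ j, 1 ≤ j → ∀ c : Bool, fProb w X A M j c ω
      = Pr w ({ω' | A ω' = c} ∩ T j) / Pr w ({ω' | A ω' = c} ∩ T (j - 1)) := by
    intro j hj c
    have h1 : {ω' | M j ω' = M j ω} ∩
        {ω' | X ω' = X ω ∧ A ω' = c ∧ ∀ i ∈ Finset.Icc 1 (j - 1), M i ω' = M i ω}
        = {ω' | A ω' = c} ∩ T j := by
      ext ω'
      simp only [Set.mem_inter_iff, Set.mem_setOf_eq, Finset.mem_Icc, hT]
      constructor
      · rintro ⟨hm, hx, ha, hM⟩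
        refine ⟨ha, hx, fun i hi => ?_⟩
        rcases eq_or_lt_of_le hi.2 with h | h
        · rw [h]; exact hm
        · exact hM i ⟨hi.1, by omega⟩
      · rintro ⟨ha, hx, hM⟩
        exact ⟨hM j ⟨hj, le_refl _⟩, hx, ha, fun i hi => hM i ⟨hi.1, by omega⟩⟩
    have h2 : {ω' | X ω' = X ω ∧ A ω' = c ∧ ∀ i ∈ Finset.Icc 1 (j - 1), M i ω' = M i ω}
        = {ω' | A ω' = c} ∩ T (j - 1) := by
      ext ω'
      simp only [Set.mem_inter_iff, Set.mem_setOf_eq, hT]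
      tauto
    show cPr w _ _ = _
    rw [cPr, h1, h2]
  -- positivity
  have key : ∀ x y : ℝ, 0 ≤ x → 0 ≤ y → 0 < x / y → 0 < x ∧ 0 < y := by
    intro x y hx hy h
    rcases div_pos_iff.mp h with ⟨h1, h2⟩ | ⟨h1, h2⟩
    · exact ⟨h1, h2⟩
    · constructor <;> linarith
  have hQpos : ∀ j ≤ K, 0 < Pr w (T j) := by
    intro j hj
    exact (key _ _ (Pr_nonneg w hw _) (Pr_nonneg w hw _)
      (by rw [← hpi j true]; exact hπ j hj true ω)).2
  have hPpos : ∀ j ≤ K, ∀ c : Bool, 0 < Pr w ({ω' | A ω' = c} ∩ T j) := by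
    intro j hj c
    exact (key _ _ (Pr_nonneg w hw _) (Pr_nonneg w hw _)
      (by rw [← hpi j c]; exact hπ j hj c ω)).1
  -- per-factor identity: π_j(c)/π_{j-1}(c) = f_j(c) * (Q (j-1) / Q j)
  have step : ∀ j, 1 ≤ j → j ≤ K → ∀ c : Bool,
      piProb w X A M j c ω / piProb w X A M (j - 1) c ω
      = fProb w X A M j c ω * (Pr w (T (j - 1)) / Pr w (T j)) := by
    intro j hj hjK c
    rw [hpi, hpi, hfr j hj c]
    have q1 := (hQpos j hjK).ne'
    have q2 := (hQpos (j - 1) (by omega)).ne'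
    have p1 := (hPpos j hjK c).ne'
    have p2 := (hPpos (j - 1) (by omega) c).ne'
    field_simp
  -- telescoping of the π ratio
  have tele : piProb w X A M k b ω / piProb w X A M 0 b ω
      = ∏ j ∈ Finset.Icc 1 k, fProb w X A M j b ω * (Pr w (T (j - 1)) / Pr w (T j)) := by
    rw [← telescope_ratio (fun j => piProb w X A M j b ω) k
      (fun j hj => (hπ j (le_trans hj hkK) b ω).ne')]
    exact Finset.prod_congr rfl fun j hj => by
      have := Finset.mem_Icc.mp hj
      exact step j this.1 (le_trans this.2 hkK) b
  rw [tele]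
  have hrhs : ∀ j ∈ Finset.Icc 1 k,
      piProb w X A M j (a j) ω / piProb w X A M (j - 1) (a j) ω
      = fProb w X A M j (a j) ω * (Pr w (T (j - 1)) / Pr w (T j)) := by
    intro j hj
    have := Finset.mem_Icc.mp hj
    exact step j this.1 (le_trans this.2 hkK) (a j)
  rw [Finset.prod_congr rfl hrhs]
  obtain ⟨m, rfl⟩ : ∃ m, k = m + 1 := ⟨k - 1, by omega⟩
  simp only [Nat.add_sub_cancel]
  rw [Finset.prod_Icc_succ_top (by omega : 1 ≤ m + 1),
    Finset.prod_Icc_succ_top (by omega : 1 ≤ m + 1)]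
  have main : (∏ j ∈ Finset.Icc 1 m, fProb w X A M j b ω * (Pr w (T (j - 1)) / Pr w (T j))) *
      ∏ j ∈ Finset.Icc 1 m, fProb w X A M j (a j) ω / fProb w X A M j b ω
      = ∏ j ∈ Finset.Icc 1 m, fProb w X A M j (a j) ω * (Pr w (T (j - 1)) / Pr w (T j)) := by
    rw [← Finset.prod_mul_distrib]
    refine Finset.prod_congr rfl fun j hj => ?_
    have hj' := Finset.mem_Icc.mp hj
    have hfb := (hf j hj'.1 (by omega) b ω).ne'
    have hc : fProb w X A M j b ω * (fProb w X A M j (a j) ω / fProb w X A M j b ω)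
        = fProb w X A M j (a j) ω := by
      field_simp
    rw [mul_right_comm, hc]
  calc (∏ j ∈ Finset.Icc 1 m, fProb w X A M j b ω * (Pr w (T (j - 1)) / Pr w (T j))) *
        (fProb w X A M (m + 1) b ω * (Pr w (T (m + 1 - 1)) / Pr w (T (m + 1)))) *
        ∏ j ∈ Finset.Icc 1 m, fProb w X A M j (a j) ω / fProb w X A M j b ω
      = ((∏ j ∈ Finset.Icc 1 m, fProb w X A M j b ω * (Pr w (T (j - 1)) / Pr w (T j))) *
        ∏ j ∈ Finset.Icc 1 m, fProb w X A M j (a j) ω / fProb w X A M j b ω) *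
        (fProb w X A M (m + 1) b ω * (Pr w (T (m + 1 - 1)) / Pr w (T (m + 1)))) := by ring
    _ = _ := by rw [main, hb]
end

section
/- Inverse probability weighting identity: for a binary random variable A, random variables X and Y (Y integrable), and a ∈ {0,1} with P(A = a | X) bounded away from 0, E[ 1{A = a} / P(A = a | X) · Y ] = E[ E[Y | X, A = a] ]. -/
open Finset

variable {Ω : Type*}

/-- Inverse probability weighting identity:
`E[1{A = a} / P(A = a | X) · Y] = E[E[Y | X, A = a]]`. -/
theorem ipw_identity [Fintype Ω] {χ : Type*}
    (w : Ω → ℝ) (hw : ∀ ω, 0 ≤ w ω) (hw1 : ∑ ω, w ω = 1)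
    (A : Ω → Bool) (X : Ω → χ) (Y : Ω → ℝ) (a : Bool)
    (ε : ℝ) (hε : 0 < ε)
    (hpos : ∀ ω, ε ≤ cPr w {ω' | A ω' = a} {ω' | X ω' = X ω}) :
    ∑ ω, w ω * ((if A ω = a then (1 : ℝ) else 0) /
        cPr w {ω' | A ω' = a} {ω' | X ω' = X ω} * Y ω)
      = ∑ ω, w ω * cExp w Y {ω' | X ω' = X ω ∧ A ω' = a} := by
  classical
  have hsets : ∀ ω : Ω, ({ω' | A ω' = a} ∩ {ω' | X ω' = X ω} : Set Ω)
      = {ω' | X ω' = X ω ∧ A ω' = a} := by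
    intro ω; ext ω'; simp [Set.mem_setOf_eq, and_comm]
  have hPnn : ∀ ω : Ω, 0 ≤ Pr w {ω' | X ω' = X ω} := by
    intro ω
    exact Finset.sum_nonneg fun ω' _ => Set.indicator_nonneg (fun x _ => hw x) _
  have hPpos : ∀ ω : Ω, 0 < Pr w {ω' | X ω' = X ω} := by
    intro ω
    rcases (hPnn ω).lt_or_eq with h | h
    · exact h
    · exfalso
      have := hpos ω
      rw [cPr, ← h, div_zero] at this
      linarith
  have hQpos : ∀ ω : Ω, 0 < Pr w {ω' | X ω' = X ω ∧ A ω' = a} := by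
    intro ω
    have hc : 0 < cPr w {ω' | A ω' = a} {ω' | X ω' = X ω} := lt_of_lt_of_le hε (hpos ω)
    rw [cPr, hsets] at hc
    rcases div_pos_iff.mp hc with ⟨h1, _⟩ | ⟨_, h2⟩
    · exact h1
    · linarith [hPnn ω]
  -- expand RHS as a double sum and swap
  have hRHS : ∑ ω, w ω * cExp w Y {ω' | X ω' = X ω ∧ A ω' = a}
      = ∑ ω', ∑ ω, (if X ω' = X ω ∧ A ω' = a then
          w ω * (w ω' * Y ω') / Pr w {ω'' | X ω'' = X ω ∧ A ω'' = a} else 0) := by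
    rw [Finset.sum_comm]
    refine Finset.sum_congr rfl fun ω _ => ?_
    rw [cExp, div_eq_mul_inv, ← mul_assoc, mul_comm (w ω), mul_assoc, Finset.sum_mul]
    refine Finset.sum_congr rfl fun ω' _ => ?_
    rw [Set.indicator_apply]
    simp only [Set.mem_setOf_eq]
    by_cases h : X ω' = X ω ∧ A ω' = a
    · rw [if_pos h, if_pos h, div_eq_mul_inv]
      ring
    · rw [if_neg h, if_neg h, zero_mul]
  rw [hRHS]
  refine Finset.sum_congr rfl fun ω' _ => ?_
  by_cases hA : A ω' = a
  · -- inner sum: nonzero only when X ω' = X ω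
    have key : ∀ ω : Ω, (if X ω' = X ω ∧ A ω' = a then
        w ω * (w ω' * Y ω') / Pr w {ω'' | X ω'' = X ω ∧ A ω'' = a} else 0)
        = (if X ω = X ω' then w ω else 0) *
          (w ω' * Y ω' / Pr w {ω'' | X ω'' = X ω' ∧ A ω'' = a}) := by
      intro ω
      by_cases hx : X ω' = X ω
      · have hxx : ({ω'' | X ω'' = X ω} : Set Ω) = {ω'' | X ω'' = X ω'} := by
          ext; simp [hx]
        have hset : ({ω'' | X ω'' = X ω ∧ A ω'' = a} : Set Ω)
            = {ω'' | X ω'' = X ω' ∧ A ω'' = a} := by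
          ext; simp [hx]
        rw [if_pos ⟨hx, hA⟩, if_pos hx.symm, hset]
        ring
      · rw [if_neg (fun h => hx h.1), if_neg (fun h => hx h.symm), zero_mul]
    rw [Finset.sum_congr rfl (fun ω _ => key ω), ← Finset.sum_mul]
    have hPsum : ∑ ω, (if X ω = X ω' then w ω else 0) = Pr w {ω'' | X ω'' = X ω'} := by
      rw [Pr]
      refine Finset.sum_congr rfl fun ω _ => ?_
      rw [Set.indicator_apply]
      simp [Set.mem_setOf_eq]
    rw [hPsum, cPr, hsets, if_pos hA]
    have h1 := (hPpos ω').ne'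
    have h2 := (hQpos ω').ne'
    field_simp
  · rw [if_neg hA]
    rw [Finset.sum_eq_zero fun ω _ => by rw [if_neg (fun h => hA h.2)]]
    simp
end

section
/- Doubly robust bias product formula: with A ∈ {0,1}, covariates X, integrable outcome Y, true propensity π₀(a|X) = P(A=a|X) ≥ ε, true regression μ₀(X) = E[Y|X,A=a], and working models π̂(X) ∈ [ε,1] and μ̂(X) bounded, the bias of the doubly robust functional satisfies E[ 1{A=a}/π̂(X) · (Y − μ̂(X)) + μ̂(X) ] − E[μ₀(X)] = E[ (π̂(X) − π₀(a|X))(μ̂(X) − μ₀(X)) / π̂(X) ]. -/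
open Finset

variable {Ω : Type*}

/-- Doubly robust bias product formula: the bias of the doubly robust functional with
working models `π̂, μ̂` equals the expectation of the product of the model errors
divided by `π̂`. -/
theorem dr_bias_product_formula [Fintype Ω] {χ : Type*}
    (w : Ω → ℝ) (hw : ∀ ω, 0 ≤ w ω) (hw1 : ∑ ω, w ω = 1)
    (A : Ω → Bool) (X : Ω → χ) (Y : Ω → ℝ) (a : Bool)
    (πhat μhat : χ → ℝ) (ε : ℝ) (hε : 0 < ε)
    (hπhat : ∀ x, ε ≤ πhat x ∧ πhat x ≤ 1)
    (hμhat : ∃ C, ∀ x, |μhat x| ≤ C) :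
    (∑ ω, w ω * ((if A ω = a then (1 : ℝ) else 0) / πhat (X ω) * (Y ω - μhat (X ω))
        + μhat (X ω)))
      - ∑ ω, w ω * cExp w Y {ω' | X ω' = X ω ∧ A ω' = a}
    = ∑ ω, w ω * ((πhat (X ω) - cPr w {ω' | A ω' = a} {ω' | X ω' = X ω}) *
        (μhat (X ω) - cExp w Y {ω' | X ω' = X ω ∧ A ω' = a}) / πhat (X ω)) := by
  classical
  have hπ : ∀ x : χ, πhat x ≠ 0 := fun x => ne_of_gt (lt_of_lt_of_le hε (hπhat x).1)
  have hPr1 : ∀ x : χ, Pr w {ω' | X ω' = x}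
      = ∑ ω ∈ Finset.univ.filter (fun ω => X ω = x), w ω := by
    intro x
    rw [Pr, Finset.sum_indicator_eq_sum_filter]
    rfl
  have hPr2 : ∀ x : χ, Pr w {ω' | X ω' = x ∧ A ω' = a}
      = ∑ ω ∈ Finset.univ.filter (fun ω => X ω = x), (if A ω = a then w ω else 0) := by
    intro x
    rw [Pr, Finset.sum_indicator_eq_sum_filter, Finset.sum_filter, Finset.sum_filter]
    refine Finset.sum_congr rfl fun ω _ => ?_
    by_cases h1 : X ω = x <;> by_cases h2 : A ω = a <;>
      simp [h1, h2, Set.mem_setOf_eq]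
  have hNum : ∀ x : χ, (∑ ω, Set.indicator {ω' | X ω' = x ∧ A ω' = a}
        (fun ω' => w ω' * Y ω') ω)
      = ∑ ω ∈ Finset.univ.filter (fun ω => X ω = x), (if A ω = a then w ω * Y ω else 0) := by
    intro x
    rw [Finset.sum_indicator_eq_sum_filter, Finset.sum_filter, Finset.sum_filter]
    refine Finset.sum_congr rfl fun ω _ => ?_
    by_cases h1 : X ω = x <;> by_cases h2 : A ω = a <;>
      simp [h1, h2, Set.mem_setOf_eq]
  have hPr3 : ∀ x : χ, Pr w ({ω' | A ω' = a} ∩ {ω' | X ω' = x})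
      = ∑ ω ∈ Finset.univ.filter (fun ω => X ω = x), (if A ω = a then w ω else 0) := by
    intro x
    have hset : ({ω' | A ω' = a} ∩ {ω' | X ω' = x}) = {ω' | X ω' = x ∧ A ω' = a} := by
      ext ω'; simp [Set.mem_setOf_eq, and_comm]
    rw [hset]; exact hPr2 x
  have hSQ : ∀ x : χ,
      (∑ ω ∈ Finset.univ.filter (fun ω => X ω = x), (if A ω = a then w ω * Y ω else 0))
      = (∑ ω ∈ Finset.univ.filter (fun ω => X ω = x), (if A ω = a then w ω else 0))
        * cExp w Y {ω' | X ω' = x ∧ A ω' = a} := by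
    intro x
    rw [cExp, hPr2, hNum]
    by_cases hq : (∑ ω ∈ Finset.univ.filter (fun ω => X ω = x),
        (if A ω = a then w ω else 0)) = 0
    · rw [hq, zero_mul]
      refine Finset.sum_eq_zero fun ω hω => ?_
      have h0 := (Finset.sum_eq_zero_iff_of_nonneg
        (fun ω _ => by split <;> simp [hw ω])).mp hq ω hω
      split_ifs with h
      · have hw0 : w ω = 0 := by simpa [h] using h0
        simp [hw0]
      · rfl
    · field_simp
  have hQP : ∀ x : χ,
      (∑ ω ∈ Finset.univ.filter (fun ω => X ω = x), (if A ω = a then w ω else 0))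
      = cPr w {ω' | A ω' = a} {ω' | X ω' = x}
        * (∑ ω ∈ Finset.univ.filter (fun ω => X ω = x), w ω) := by
    intro x
    rw [cPr, hPr3, hPr1]
    by_cases hp : (∑ ω ∈ Finset.univ.filter (fun ω => X ω = x), w ω) = 0
    · rw [hp, mul_zero]
      refine Finset.sum_eq_zero fun ω hω => ?_
      have h0 := (Finset.sum_eq_zero_iff_of_nonneg (fun ω _ => hw ω)).mp hp ω hω
      simp [h0]
    · field_simp
  rw [← Finset.sum_sub_distrib, ← sub_eq_zero, ← Finset.sum_sub_distrib]
  rw [← Finset.sum_fiberwise_of_maps_to (t := Finset.univ.image X) (g := X)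
      (fun ω _ => Finset.mem_image_of_mem X (Finset.mem_univ ω))]
  refine Finset.sum_eq_zero fun x _ => ?_
  have key : ∀ ω ∈ Finset.univ.filter (fun ω => X ω = x),
      (w ω * ((if A ω = a then (1 : ℝ) else 0) / πhat (X ω) * (Y ω - μhat (X ω))
          + μhat (X ω))
        - w ω * cExp w Y {ω' | X ω' = X ω ∧ A ω' = a})
      - w ω * ((πhat (X ω) - cPr w {ω' | A ω' = a} {ω' | X ω' = X ω}) *
          (μhat (X ω) - cExp w Y {ω' | X ω' = X ω ∧ A ω' = a}) / πhat (X ω))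
      = (1 / πhat x) * (if A ω = a then w ω * Y ω else 0)
        + (-(μhat x / πhat x)) * (if A ω = a then w ω else 0)
        + (μhat x - cExp w Y {ω' | X ω' = x ∧ A ω' = a}
            - (πhat x - cPr w {ω' | A ω' = a} {ω' | X ω' = x}) *
              (μhat x - cExp w Y {ω' | X ω' = x ∧ A ω' = a}) / πhat x) * w ω := by
    intro ω hω
    have hXω : X ω = x := by simpa using hω
    rw [hXω]
    split_ifs with h <;> ring
  rw [Finset.sum_congr rfl key, Finset.sum_add_distrib, Finset.sum_add_distrib,
    ← Finset.mul_sum, ← Finset.mul_sum, ← Finset.mul_sum, hSQ x, hQP x]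
  field_simp [hπ x]
  ring
end

section
/- Two-mediator mediation formula: with discrete X, A, M₁, M₂, Y, potential outcomes Y(a,m₁,m₂), M₂(a,m₁), M₁(a), assume consistency, positivity, and the conditional independence assumptions (M₁(a₁), M₂(a₂,m₁), Y(a,m₁,m₂)) ⫫ A | X; (M₂(a₂,m₁), Y(a,m₁,m₂)) ⫫ M₁(a₁) | (X,A); and Y(a,m₁,m₂) ⫫ M₂(a₂,m₁*) | (X,A,M₁). Then E[Y(a, M₁(a₁), M₂(a₂, M₁(a₁)))] = Σ_{x,m₁,m₂} E[Y | x, a, m₁, m₂] · P(m₂ | x, a₂, m₁) · P(m₁ | x, a₁) · P(x). -/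
open Finset

variable {Ω : Type*}

/-- Discrete conditional independence of `U` and `V` given `C`:
`P(U = u, V = v, C = c) · P(C = c) = P(U = u, C = c) · P(V = v, C = c)` for all values. -/
def DCondIndep [Fintype Ω] {α β γ : Type*} (w : Ω → ℝ)
    (U : Ω → α) (V : Ω → β) (C : Ω → γ) : Prop :=
  ∀ (u : α) (v : β) (c : γ),
    Pr w {ω | U ω = u ∧ V ω = v ∧ C ω = c} * Pr w {ω | C ω = c} =
      Pr w {ω | U ω = u ∧ C ω = c} * Pr w {ω | V ω = v ∧ C ω = c}

set_option linter.unusedSectionVars false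

section helpers
variable [Fintype Ω] (w : Ω → ℝ)

lemma pr_nonneg (hw : ∀ ω, 0 ≤ w ω) (s : Set Ω) : 0 ≤ Pr w s :=
  Finset.sum_nonneg fun ω _ => Set.indicator_nonneg (fun a _ => hw a) ω

lemma weight_zero (hw : ∀ ω, 0 ≤ w ω) {s : Set Ω} (h : Pr w s = 0) {ω : Ω} (hω : ω ∈ s) :
    w ω = 0 := by
  classical
  have h0 : ∀ i ∈ Finset.univ, (0:ℝ) ≤ Set.indicator s w i :=
    fun i _ => Set.indicator_nonneg (fun a _ => hw a) i
  have := (Finset.sum_eq_zero_iff_of_nonneg h0).mp h ω (Finset.mem_univ ω)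
  rwa [Set.indicator_of_mem hω] at this

lemma pr_zero_of_subset (hw : ∀ ω, 0 ≤ w ω) {t : Set Ω} (h : Pr w t = 0) {s : Set Ω}
    (hsub : s ⊆ t) : Pr w s = 0 :=
  Finset.sum_eq_zero fun ω _ => by
    by_cases hω : ω ∈ s
    · rw [Set.indicator_of_mem hω]; exact weight_zero w hw h (hsub hω)
    · exact Set.indicator_of_notMem hω _

lemma indsum_zero (hw : ∀ ω, 0 ≤ w ω) {t : Set Ω} (h : Pr w t = 0) {s : Set Ω}
    (hsub : s ⊆ t) (f : Ω → ℝ) : ∑ ω, Set.indicator s (fun ω' => w ω' * f ω') ω = 0 :=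
  Finset.sum_eq_zero fun ω _ => by
    by_cases hω : ω ∈ s
    · rw [Set.indicator_of_mem hω, weight_zero w hw h (hsub hω), zero_mul]
    · exact Set.indicator_of_notMem hω _

lemma indicator_fiber_sum {V : Type*} [Fintype V] (g : Ω → V) (p : Ω → Prop) (u : Ω → ℝ)
    (ω : Ω) : ∑ v, Set.indicator {ω' | g ω' = v ∧ p ω'} u ω
      = Set.indicator {ω' | p ω'} u ω := by
  classical
  by_cases hp : p ω
  · rw [Set.indicator_of_mem (show ω ∈ {ω' | p ω'} from hp), Finset.sum_eq_single (g ω)]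
    · exact Set.indicator_of_mem (show ω ∈ {ω' | g ω' = g ω ∧ p ω'} from ⟨rfl, hp⟩) u
    · intro v _ hv
      exact Set.indicator_of_notMem
        (fun hmem : ω ∈ {ω' | g ω' = v ∧ p ω'} => hv hmem.1.symm) u
    · intro h; exact absurd (Finset.mem_univ _) h
  · rw [Set.indicator_of_notMem (show ω ∉ {ω' | p ω'} from hp)]
    exact Finset.sum_eq_zero fun v _ => Set.indicator_of_notMem
      (fun hmem : ω ∈ {ω' | g ω' = v ∧ p ω'} => hp hmem.2) u

lemma pr_fiber_sum {V : Type*} [Fintype V] (g : Ω → V) (p : Ω → Prop) :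
    ∑ v, Pr w {ω | g ω = v ∧ p ω} = Pr w {ω | p ω} := by
  classical
  unfold Pr
  rw [Finset.sum_comm]
  exact Finset.sum_congr rfl fun ω _ => indicator_fiber_sum g p w ω

lemma indicator_fiber_sum_real (f : Ω → ℝ) (p : Ω → Prop) (u : Ω → ℝ) (ω : Ω) :
    ∑ y ∈ Finset.image f Finset.univ, Set.indicator {ω' | f ω' = y ∧ p ω'} u ω
      = Set.indicator {ω' | p ω'} u ω := by
  classical
  by_cases hp : p ω
  · rw [Set.indicator_of_mem (show ω ∈ {ω' | p ω'} from hp),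
      Finset.sum_eq_single_of_mem (f ω) (Finset.mem_image_of_mem f (Finset.mem_univ ω))]
    · exact Set.indicator_of_mem (show ω ∈ {ω' | f ω' = f ω ∧ p ω'} from ⟨rfl, hp⟩) u
    · intro v _ hv
      exact Set.indicator_of_notMem
        (fun hmem : ω ∈ {ω' | f ω' = v ∧ p ω'} => hv hmem.1.symm) u
  · rw [Set.indicator_of_notMem (show ω ∉ {ω' | p ω'} from hp)]
    exact Finset.sum_eq_zero fun v _ => Set.indicator_of_notMem
      (fun hmem : ω ∈ {ω' | f ω' = v ∧ p ω'} => hp hmem.2) u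

lemma pr_fiber_sum_real (f : Ω → ℝ) (p : Ω → Prop) :
    ∑ y ∈ Finset.image f Finset.univ, Pr w {ω | f ω = y ∧ p ω} = Pr w {ω | p ω} := by
  classical
  unfold Pr
  rw [Finset.sum_comm]
  exact Finset.sum_congr rfl fun ω _ => indicator_fiber_sum_real f p w ω

lemma wsum_fiber (f : Ω → ℝ) (p : Ω → Prop) :
    ∑ y ∈ Finset.image f Finset.univ, y * Pr w {ω | f ω = y ∧ p ω}
      = ∑ ω, Set.indicator {ω' | p ω'} (fun ω' => w ω' * f ω') ω := by
  classical
  unfold Pr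
  calc ∑ y ∈ Finset.image f Finset.univ, y * ∑ ω, Set.indicator {ω' | f ω' = y ∧ p ω'} w ω
      = ∑ y ∈ Finset.image f Finset.univ, ∑ ω, y * Set.indicator {ω' | f ω' = y ∧ p ω'} w ω := by
        simp [Finset.mul_sum]
    _ = ∑ ω, ∑ y ∈ Finset.image f Finset.univ, y * Set.indicator {ω' | f ω' = y ∧ p ω'} w ω :=
        Finset.sum_comm
    _ = ∑ ω, Set.indicator {ω' | p ω'} (fun ω' => w ω' * f ω') ω := by
        refine Finset.sum_congr rfl fun ω _ => ?_
        by_cases hp : p ω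
        · rw [Set.indicator_of_mem (show ω ∈ {ω' | p ω'} from hp),
            Finset.sum_eq_single_of_mem (f ω) (Finset.mem_image_of_mem f (Finset.mem_univ ω))]
          · rw [Set.indicator_of_mem (show ω ∈ {ω' | f ω' = f ω ∧ p ω'} from ⟨rfl, hp⟩)]; ring
          · intro v _ hv
            rw [Set.indicator_of_notMem
              (fun hmem : ω ∈ {ω' | f ω' = v ∧ p ω'} => hv hmem.1.symm), mul_zero]
        · rw [Set.indicator_of_notMem (show ω ∉ {ω' | p ω'} from hp)]
          exact Finset.sum_eq_zero fun v _ => by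
            rw [Set.indicator_of_notMem
              (fun hmem : ω ∈ {ω' | f ω' = v ∧ p ω'} => hp hmem.2), mul_zero]

lemma combine_fin {V : Type*} [Fintype V] (g : Ω → V) (p q : Ω → Prop) (c d : ℝ)
    (h : ∀ v, Pr w {ω | g ω = v ∧ p ω} * c = Pr w {ω | g ω = v ∧ q ω} * d) :
    Pr w {ω | p ω} * c = Pr w {ω | q ω} * d := by
  rw [← pr_fiber_sum w g p, ← pr_fiber_sum w g q, Finset.sum_mul, Finset.sum_mul]
  exact Finset.sum_congr rfl fun v _ => h v

lemma combine_real (f : Ω → ℝ) (p q : Ω → Prop) (c d : ℝ)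
    (h : ∀ y, Pr w {ω | f ω = y ∧ p ω} * c = Pr w {ω | f ω = y ∧ q ω} * d) :
    Pr w {ω | p ω} * c = Pr w {ω | q ω} * d := by
  rw [← pr_fiber_sum_real w f p, ← pr_fiber_sum_real w f q, Finset.sum_mul, Finset.sum_mul]
  exact Finset.sum_congr rfl fun v _ => h v

lemma combine_wt (f : Ω → ℝ) (p q : Ω → Prop) (c d : ℝ)
    (h : ∀ y, Pr w {ω | f ω = y ∧ p ω} * c = Pr w {ω | f ω = y ∧ q ω} * d) :
    (∑ ω, Set.indicator {ω' | p ω'} (fun ω' => w ω' * f ω') ω) * c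
      = (∑ ω, Set.indicator {ω' | q ω'} (fun ω' => w ω' * f ω') ω) * d := by
  rw [← wsum_fiber w f p, ← wsum_fiber w f q, Finset.sum_mul, Finset.sum_mul]
  refine Finset.sum_congr rfl fun y _ => ?_
  rw [mul_assoc, h y, mul_assoc]

end helpers

lemma final_algebra {T G0 G1 G2 G3 G4 GC GQ P4 Ra R2 px N1 Na N2 c1 ca c2 qa q2 p0 : ℝ}
    (hpx : 0 < px) (hN1 : 0 < N1) (hNa : 0 < Na) (hN2 : 0 < N2)
    (hc1 : 0 < c1) (hca : 0 < ca) (hc2 : 0 < c2) (hqa : 0 < qa) (hq2 : 0 < q2)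
    (E0 : G1 * px = T * N1)
    (E1 : G1 * N1 = G2 * c1)
    (E2 : G2 * px = G0 * N1)
    (E3 : G3 * px = G0 * Na)
    (E4 : G4 * Na = G3 * ca)
    (E5 : G4 * ca = GC * P4)
    (E6 : GQ * ca = GC * qa)
    (E7 : P4 * Na = Ra * ca)
    (E8 : Ra * px = p0 * Na)
    (E9 : q2 * N2 = R2 * c2)
    (E10 : R2 * px = p0 * N2) :
    T = GQ / qa * (q2 / c2) * (c1 / N1) * px := by
  have hq2v : q2 = p0 * c2 / px := by
    have hR2 : R2 = p0 * N2 / px := (eq_div_iff hpx.ne').mpr E10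
    have e : q2 * N2 = p0 * c2 / px * N2 := by
      rw [E9, hR2]; field_simp; try ring
    exact mul_right_cancel₀ hN2.ne' e
  have hp0 : 0 < p0 := by
    have : p0 = q2 * px / c2 := by rw [hq2v]; field_simp
    rw [this]; positivity
  have hG2 : G2 = G0 * N1 / px := (eq_div_iff hpx.ne').mpr E2
  have hG1 : G1 = G0 * c1 / px := by
    have e : G1 * N1 = G0 * c1 / px * N1 := by rw [E1, hG2]; field_simp; try ring
    exact mul_right_cancel₀ hN1.ne' e
  have hT : T = G0 * c1 / N1 := by
    have e : T * N1 = G0 * c1 / N1 * N1 := by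
      rw [← E0, hG1]; field_simp
    exact mul_right_cancel₀ hN1.ne' e
  have hG3 : G3 = G0 * Na / px := (eq_div_iff hpx.ne').mpr E3
  have hG4 : G4 = G0 * ca / px := by
    have e : G4 * Na = G0 * ca / px * Na := by rw [E4, hG3]; field_simp; try ring
    exact mul_right_cancel₀ hNa.ne' e
  have hRa : Ra = p0 * Na / px := (eq_div_iff hpx.ne').mpr E8
  have hP4 : P4 = p0 * ca / px := by
    have e : P4 * Na = p0 * ca / px * Na := by rw [E7, hRa]; field_simp; try ring
    exact mul_right_cancel₀ hNa.ne' e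
  have hGC : GC = G0 * ca / p0 := by
    have e1 : G4 * ca * px = G0 * ca * ca := by rw [hG4]; field_simp; try ring
    have e2 : GC * P4 * px = G0 * ca * ca := by rw [← E5]; exact e1
    have e3 : GC * p0 * ca = G0 * ca * ca := by
      calc GC * p0 * ca = GC * P4 * px := by rw [hP4]; field_simp; try ring
        _ = G0 * ca * ca := e2
    rw [eq_div_iff hp0.ne']
    exact mul_right_cancel₀ hca.ne' (by linear_combination e3)
  have hGQ : GQ = G0 * qa / p0 := by
    have e : GQ * ca = G0 * qa / p0 * ca := by rw [E6, hGC]; field_simp; try ring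
    exact mul_right_cancel₀ hca.ne' e
  rw [hT, hGQ, hq2v]
  field_simp

/-- Two-mediator mediation formula (discrete case): under consistency, conditional
independence, and positivity,
`E[Y(a, M₁(a₁), M₂(a₂, M₁(a₁)))]
  = Σ_{x,m₁,m₂} E[Y | x, a, m₁, m₂] P(m₂ | x, a₂, m₁) P(m₁ | x, a₁) P(x)`. -/
theorem mediation_formula_two_mediators [Fintype Ω] {χ σ₁ σ₂ : Type*}
    [Fintype χ] [Fintype σ₁] [Fintype σ₂]
    (w : Ω → ℝ) (hw : ∀ ω, 0 ≤ w ω) (hw1 : ∑ ω, w ω = 1)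
    (X : Ω → χ) (A : Ω → Bool) (M₁ : Ω → σ₁) (M₂ : Ω → σ₂) (Y : Ω → ℝ)
    (Ypo : Bool → σ₁ → σ₂ → Ω → ℝ) (M₂po : Bool → σ₁ → Ω → σ₂) (M₁po : Bool → Ω → σ₁)
    -- consistency
    (hconsM₁ : ∀ (ω : Ω) (b : Bool), A ω = b → M₁po b ω = M₁ ω)
    (hconsM₂ : ∀ (ω : Ω) (b : Bool) (m₁ : σ₁), A ω = b → M₁ ω = m₁ → M₂po b m₁ ω = M₂ ω)
    (hconsY : ∀ (ω : Ω) (b : Bool) (m₁ : σ₁) (m₂ : σ₂),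
      A ω = b → M₁ ω = m₁ → M₂ ω = m₂ → Ypo b m₁ m₂ ω = Y ω)
    -- (M₁(a₁), M₂(a₂,m₁), Y(a,m₁,m₂)) ⫫ A | X
    (hci1 : ∀ (b b₁ b₂ : Bool) (m₁ : σ₁) (m₂ : σ₂),
      DCondIndep w (fun ω => (M₁po b₁ ω, M₂po b₂ m₁ ω, Ypo b m₁ m₂ ω)) A X)
    -- (M₂(a₂,m₁), Y(a,m₁,m₂)) ⫫ M₁(a₁) | (X, A)
    (hci2 : ∀ (b b₁ b₂ : Bool) (m₁ : σ₁) (m₂ : σ₂),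
      DCondIndep w (fun ω => (M₂po b₂ m₁ ω, Ypo b m₁ m₂ ω)) (M₁po b₁)
        (fun ω => (X ω, A ω)))
    -- Y(a,m₁,m₂) ⫫ M₂(a₂,m₁*) | (X, A, M₁)
    (hci3 : ∀ (b b₂ : Bool) (m₁ m₁' : σ₁) (m₂ : σ₂),
      DCondIndep w (Ypo b m₁ m₂) (M₂po b₂ m₁') (fun ω => (X ω, A ω, M₁ ω)))
    -- positivity
    (hposA : ∀ (b : Bool) (x : χ), 0 < Pr w {ω | X ω = x} →
      0 < Pr w {ω | A ω = b ∧ X ω = x})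
    (hposAM₁ : ∀ (b : Bool) (x : χ) (m₁ : σ₁), 0 < Pr w {ω | X ω = x ∧ M₁ ω = m₁} →
      0 < Pr w {ω | A ω = b ∧ X ω = x ∧ M₁ ω = m₁})
    (hposAM₂ : ∀ (b : Bool) (x : χ) (m₁ : σ₁) (m₂ : σ₂),
      0 < Pr w {ω | X ω = x ∧ M₁ ω = m₁ ∧ M₂ ω = m₂} →
      0 < Pr w {ω | A ω = b ∧ X ω = x ∧ M₁ ω = m₁ ∧ M₂ ω = m₂})
    (a a₁ a₂ : Bool) :
    ∑ ω, w ω * Ypo a (M₁po a₁ ω) (M₂po a₂ (M₁po a₁ ω) ω) ω =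
      ∑ x : χ, ∑ m₁ : σ₁, ∑ m₂ : σ₂,
        cExp w Y {ω | X ω = x ∧ A ω = a ∧ M₁ ω = m₁ ∧ M₂ ω = m₂} *
          cPr w {ω | M₂ ω = m₂} {ω | X ω = x ∧ A ω = a₂ ∧ M₁ ω = m₁} *
          cPr w {ω | M₁ ω = m₁} {ω | X ω = x ∧ A ω = a₁} *
          Pr w {ω | X ω = x} := by
  classical
  have point : ∀ ω : Ω,
      ∑ x : χ, ∑ m₁ : σ₁, ∑ m₂ : σ₂,
        Set.indicator {ω' | M₁po a₁ ω' = m₁ ∧ M₂po a₂ m₁ ω' = m₂ ∧ X ω' = x}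
          (fun ω' => w ω' * Ypo a m₁ m₂ ω') ω
        = w ω * Ypo a (M₁po a₁ ω) (M₂po a₂ (M₁po a₁ ω) ω) ω := by
    intro ω
    rw [Finset.sum_eq_single (X ω)]
    · rw [Finset.sum_eq_single (M₁po a₁ ω)]
      · rw [Finset.sum_eq_single (M₂po a₂ (M₁po a₁ ω) ω)]
        · exact Set.indicator_of_mem
            (show ω ∈ {ω' | M₁po a₁ ω' = M₁po a₁ ω ∧ M₂po a₂ (M₁po a₁ ω) ω' = M₂po a₂ (M₁po a₁ ω) ω ∧ X ω' = X ω}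
              from ⟨rfl, rfl, rfl⟩) _
        · intro m₂ _ hm₂
          exact Set.indicator_of_notMem
            (fun h : ω ∈ {ω' | M₁po a₁ ω' = M₁po a₁ ω ∧ M₂po a₂ (M₁po a₁ ω) ω' = m₂ ∧ X ω' = X ω} =>
              hm₂ h.2.1.symm) _
        · intro h; exact absurd (Finset.mem_univ _) h
      · intro m₁ _ hm₁
        refine Finset.sum_eq_zero fun m₂ _ => ?_
        exact Set.indicator_of_notMem
          (fun h : ω ∈ {ω' | M₁po a₁ ω' = m₁ ∧ M₂po a₂ m₁ ω' = m₂ ∧ X ω' = X ω} =>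
            hm₁ h.1.symm) _
      · intro h; exact absurd (Finset.mem_univ _) h
    · intro x _ hx
      refine Finset.sum_eq_zero fun m₁ _ => Finset.sum_eq_zero fun m₂ _ => ?_
      exact Set.indicator_of_notMem
        (fun h : ω ∈ {ω' | M₁po a₁ ω' = m₁ ∧ M₂po a₂ m₁ ω' = m₂ ∧ X ω' = x} =>
          hx h.2.2.symm) _
    · intro h; exact absurd (Finset.mem_univ _) h
  have key : ∀ (x : χ) (m₁ : σ₁) (m₂ : σ₂),
      (∑ ω, Set.indicator {ω' | M₁po a₁ ω' = m₁ ∧ M₂po a₂ m₁ ω' = m₂ ∧ X ω' = x}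
        (fun ω' => w ω' * Ypo a m₁ m₂ ω') ω)
      = cExp w Y {ω | X ω = x ∧ A ω = a ∧ M₁ ω = m₁ ∧ M₂ ω = m₂} *
          cPr w {ω | M₂ ω = m₂} {ω | X ω = x ∧ A ω = a₂ ∧ M₁ ω = m₁} *
          cPr w {ω | M₁ ω = m₁} {ω | X ω = x ∧ A ω = a₁} *
          Pr w {ω | X ω = x} := by
    intro x m₁ m₂
    by_cases hpx : Pr w {ω | X ω = x} = 0
    · rw [hpx, mul_zero]
      exact indsum_zero w hw hpx (fun ω h => h.2.2) _
    have hpx' : 0 < Pr w {ω | X ω = x} := lt_of_le_of_ne (pr_nonneg w hw _) (Ne.symm hpx)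
    have hN : ∀ b, 0 < Pr w {ω | A ω = b ∧ X ω = x} := fun b => hposA b x hpx'
    -- consistency rewrites
    have cs1 : ∀ (b : Bool) (m₁' : σ₁),
        Pr w {ω | M₁po b ω = m₁' ∧ A ω = b ∧ X ω = x}
          = Pr w {ω | M₁ ω = m₁' ∧ A ω = b ∧ X ω = x} := by
      intro b m₁'
      refine congrArg (Pr w) (Set.ext fun ω => ?_)
      simp only [Set.mem_setOf_eq]
      constructor
      · rintro ⟨h1, h2, h3⟩; exact ⟨by rw [← hconsM₁ ω b h2]; exact h1, h2, h3⟩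
      · rintro ⟨h1, h2, h3⟩; exact ⟨by rw [hconsM₁ ω b h2]; exact h1, h2, h3⟩
    have csBig : ∀ (b : Bool) (m₁' : σ₁) (y : ℝ),
        Pr w {ω | Ypo a m₁ m₂ ω = y ∧ M₁po b ω = m₁' ∧ M₂po a₂ m₁ ω = m₂ ∧ A ω = b ∧ X ω = x}
          = Pr w {ω | Ypo a m₁ m₂ ω = y ∧ M₁ ω = m₁' ∧ M₂po a₂ m₁ ω = m₂ ∧ A ω = b ∧ X ω = x} := by
      intro b m₁' y
      refine congrArg (Pr w) (Set.ext fun ω => ?_)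
      simp only [Set.mem_setOf_eq]
      constructor
      · rintro ⟨h1, h2, h3, h4, h5⟩
        exact ⟨h1, by rw [← hconsM₁ ω b h4]; exact h2, h3, h4, h5⟩
      · rintro ⟨h1, h2, h3, h4, h5⟩
        exact ⟨h1, by rw [hconsM₁ ω b h4]; exact h2, h3, h4, h5⟩
    have cs2 : ∀ (b : Bool),
        Pr w {ω | M₁ ω = m₁ ∧ M₂po b m₁ ω = m₂ ∧ A ω = b ∧ X ω = x}
          = Pr w {ω | M₁ ω = m₁ ∧ M₂ ω = m₂ ∧ A ω = b ∧ X ω = x} := by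
      intro b
      refine congrArg (Pr w) (Set.ext fun ω => ?_)
      simp only [Set.mem_setOf_eq]
      constructor
      · rintro ⟨h1, h2, h3, h4⟩
        exact ⟨h1, by rw [← hconsM₂ ω b m₁ h3 h1]; exact h2, h3, h4⟩
      · rintro ⟨h1, h2, h3, h4⟩
        exact ⟨h1, by rw [hconsM₂ ω b m₁ h3 h1]; exact h2, h3, h4⟩
    have csY2 : ∀ (y : ℝ),
        Pr w {ω | Ypo a m₁ m₂ ω = y ∧ M₁ ω = m₁ ∧ M₂po a m₁ ω = m₂ ∧ A ω = a ∧ X ω = x}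
          = Pr w {ω | Ypo a m₁ m₂ ω = y ∧ M₁ ω = m₁ ∧ M₂ ω = m₂ ∧ A ω = a ∧ X ω = x} := by
      intro y
      refine congrArg (Pr w) (Set.ext fun ω => ?_)
      simp only [Set.mem_setOf_eq]
      constructor
      · rintro ⟨h1, h2, h3, h4, h5⟩
        exact ⟨h1, h2, by rw [← hconsM₂ ω a m₁ h4 h2]; exact h3, h4, h5⟩
      · rintro ⟨h1, h2, h3, h4, h5⟩
        exact ⟨h1, h2, by rw [hconsM₂ ω a m₁ h4 h2]; exact h3, h4, h5⟩
    -- base independence instances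
    have I1 : ∀ (m₁' : σ₁) (m₂' : σ₂) (y : ℝ) (b : Bool),
        Pr w {ω | Ypo a m₁ m₂ ω = y ∧ M₁po a₁ ω = m₁' ∧ M₂po a₂ m₁ ω = m₂' ∧ A ω = b ∧ X ω = x}
            * Pr w {ω | X ω = x}
          = Pr w {ω | Ypo a m₁ m₂ ω = y ∧ M₁po a₁ ω = m₁' ∧ M₂po a₂ m₁ ω = m₂' ∧ X ω = x}
            * Pr w {ω | A ω = b ∧ X ω = x} := by
      intro m₁' m₂' y b
      have h := hci1 a a₁ a₂ m₁ m₂ (m₁', m₂', y) b x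
      convert h using 3 <;> (ext ω; simp only [Set.mem_setOf_eq, Prod.mk.injEq]; tauto)
    have I2m : ∀ (m₁' : σ₁) (y : ℝ),
        Pr w {ω | Ypo a m₁ m₂ ω = y ∧ M₁po a₁ ω = m₁' ∧ M₂po a₂ m₁ ω = m₂ ∧ A ω = a₁ ∧ X ω = x}
            * Pr w {ω | A ω = a₁ ∧ X ω = x}
          = Pr w {ω | Ypo a m₁ m₂ ω = y ∧ M₂po a₂ m₁ ω = m₂ ∧ A ω = a₁ ∧ X ω = x}
            * Pr w {ω | M₁ ω = m₁' ∧ A ω = a₁ ∧ X ω = x} := by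
      intro m₁' y
      have h := hci2 a a₁ a₂ m₁ m₂ (m₂, y) m₁' (x, a₁)
      rw [← cs1 a₁ m₁']
      convert h using 3 <;> (ext ω; simp only [Set.mem_setOf_eq, Prod.mk.injEq]; tauto)
    have I2c : ∀ (b : Bool) (m₁' : σ₁) (y : ℝ),
        Pr w {ω | Ypo a m₁ m₂ ω = y ∧ M₁ ω = m₁' ∧ M₂po a₂ m₁ ω = m₂ ∧ A ω = b ∧ X ω = x}
            * Pr w {ω | A ω = b ∧ X ω = x}
          = Pr w {ω | Ypo a m₁ m₂ ω = y ∧ M₂po a₂ m₁ ω = m₂ ∧ A ω = b ∧ X ω = x}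
            * Pr w {ω | M₁ ω = m₁' ∧ A ω = b ∧ X ω = x} := by
      intro b m₁' y
      have h := hci2 a b a₂ m₁ m₂ (m₂, y) m₁' (x, b)
      rw [← cs1 b m₁']
      have hb : Pr w {ω | Ypo a m₁ m₂ ω = y ∧ M₁ ω = m₁' ∧ M₂po a₂ m₁ ω = m₂ ∧ A ω = b ∧ X ω = x}
          = Pr w {ω | Ypo a m₁ m₂ ω = y ∧ M₁po b ω = m₁' ∧ M₂po a₂ m₁ ω = m₂ ∧ A ω = b ∧ X ω = x} := by
        refine congrArg (Pr w) (Set.ext fun ω => ?_)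
        simp only [Set.mem_setOf_eq]
        constructor
        · rintro ⟨h1, h2, h3, h4, h5⟩
          exact ⟨h1, by rw [hconsM₁ ω b h4]; exact h2, h3, h4, h5⟩
        · rintro ⟨h1, h2, h3, h4, h5⟩
          exact ⟨h1, by rw [← hconsM₁ ω b h4]; exact h2, h3, h4, h5⟩
      rw [hb]
      convert h using 3 <;> (ext ω; simp only [Set.mem_setOf_eq, Prod.mk.injEq]; tauto)
    have I3a : ∀ (y : ℝ),
        Pr w {ω | Ypo a m₁ m₂ ω = y ∧ M₁ ω = m₁ ∧ M₂po a₂ m₁ ω = m₂ ∧ A ω = a ∧ X ω = x}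
            * Pr w {ω | M₁ ω = m₁ ∧ A ω = a ∧ X ω = x}
          = Pr w {ω | Ypo a m₁ m₂ ω = y ∧ M₁ ω = m₁ ∧ A ω = a ∧ X ω = x}
            * Pr w {ω | M₁ ω = m₁ ∧ M₂po a₂ m₁ ω = m₂ ∧ A ω = a ∧ X ω = x} := by
      intro y
      have h := hci3 a a₂ m₁ m₁ m₂ y m₂ (x, a, m₁)
      convert h using 3 <;> (ext ω; simp only [Set.mem_setOf_eq, Prod.mk.injEq]; tauto)
    have I3b : ∀ (y : ℝ),
        Pr w {ω | Ypo a m₁ m₂ ω = y ∧ M₁ ω = m₁ ∧ M₂ ω = m₂ ∧ A ω = a ∧ X ω = x}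
            * Pr w {ω | M₁ ω = m₁ ∧ A ω = a ∧ X ω = x}
          = Pr w {ω | Ypo a m₁ m₂ ω = y ∧ M₁ ω = m₁ ∧ A ω = a ∧ X ω = x}
            * Pr w {ω | M₁ ω = m₁ ∧ M₂ ω = m₂ ∧ A ω = a ∧ X ω = x} := by
      intro y
      have h := hci3 a a m₁ m₁ m₂ y m₂ (x, a, m₁)
      rw [← csY2 y, ← cs2 a]
      convert h using 3 <;> (ext ω; simp only [Set.mem_setOf_eq, Prod.mk.injEq]; tauto)
    -- marginalized instances
    have J1 : ∀ (m₂' : σ₂) (y : ℝ) (b : Bool),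
        Pr w {ω | Ypo a m₁ m₂ ω = y ∧ M₂po a₂ m₁ ω = m₂' ∧ A ω = b ∧ X ω = x}
            * Pr w {ω | X ω = x}
          = Pr w {ω | Ypo a m₁ m₂ ω = y ∧ M₂po a₂ m₁ ω = m₂' ∧ X ω = x}
            * Pr w {ω | A ω = b ∧ X ω = x} := by
      intro m₂' y b
      refine combine_fin w (M₁po a₁) _ _ _ _ (fun m₁' => ?_)
      convert I1 m₁' m₂' y b using 3 <;> (ext ω; simp only [Set.mem_setOf_eq]; tauto)
    have K1 : ∀ (y : ℝ) (b : Bool),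
        Pr w {ω | Ypo a m₁ m₂ ω = y ∧ M₁po a₁ ω = m₁ ∧ A ω = b ∧ X ω = x}
            * Pr w {ω | X ω = x}
          = Pr w {ω | Ypo a m₁ m₂ ω = y ∧ M₁po a₁ ω = m₁ ∧ X ω = x}
            * Pr w {ω | A ω = b ∧ X ω = x} := by
      intro y b
      refine combine_fin w (M₂po a₂ m₁) _ _ _ _ (fun m₂' => ?_)
      convert I1 m₁ m₂' y b using 3 <;> (ext ω; simp only [Set.mem_setOf_eq]; tauto)
    -- weighted and probability versions
    have I1w : ∀ b : Bool,
        (∑ ω, Set.indicator {ω' | M₁po a₁ ω' = m₁ ∧ M₂po a₂ m₁ ω' = m₂ ∧ A ω' = b ∧ X ω' = x}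
            (fun ω' => w ω' * Ypo a m₁ m₂ ω') ω) * Pr w {ω | X ω = x}
          = (∑ ω, Set.indicator {ω' | M₁po a₁ ω' = m₁ ∧ M₂po a₂ m₁ ω' = m₂ ∧ X ω' = x}
            (fun ω' => w ω' * Ypo a m₁ m₂ ω') ω) * Pr w {ω | A ω = b ∧ X ω = x} :=
      fun b => combine_wt w (Ypo a m₁ m₂) _ _ _ _ (fun y => I1 m₁ m₂ y b)
    have I1p : ∀ b : Bool,
        Pr w {ω | M₁po a₁ ω = m₁ ∧ M₂po a₂ m₁ ω = m₂ ∧ A ω = b ∧ X ω = x}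
            * Pr w {ω | X ω = x}
          = Pr w {ω | M₁po a₁ ω = m₁ ∧ M₂po a₂ m₁ ω = m₂ ∧ X ω = x}
            * Pr w {ω | A ω = b ∧ X ω = x} :=
      fun b => combine_real w (Ypo a m₁ m₂) _ _ _ _ (fun y => I1 m₁ m₂ y b)
    have J1w : ∀ b : Bool,
        (∑ ω, Set.indicator {ω' | M₂po a₂ m₁ ω' = m₂ ∧ A ω' = b ∧ X ω' = x}
            (fun ω' => w ω' * Ypo a m₁ m₂ ω') ω) * Pr w {ω | X ω = x}
          = (∑ ω, Set.indicator {ω' | M₂po a₂ m₁ ω' = m₂ ∧ X ω' = x}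
            (fun ω' => w ω' * Ypo a m₁ m₂ ω') ω) * Pr w {ω | A ω = b ∧ X ω = x} :=
      fun b => combine_wt w (Ypo a m₁ m₂) _ _ _ _ (fun y => J1 m₂ y b)
    have J1p : ∀ b : Bool,
        Pr w {ω | M₂po a₂ m₁ ω = m₂ ∧ A ω = b ∧ X ω = x} * Pr w {ω | X ω = x}
          = Pr w {ω | M₂po a₂ m₁ ω = m₂ ∧ X ω = x} * Pr w {ω | A ω = b ∧ X ω = x} :=
      fun b => combine_real w (Ypo a m₁ m₂) _ _ _ _ (fun y => J1 m₂ y b)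
    have K1p : ∀ b : Bool,
        Pr w {ω | M₁po a₁ ω = m₁ ∧ A ω = b ∧ X ω = x} * Pr w {ω | X ω = x}
          = Pr w {ω | M₁po a₁ ω = m₁ ∧ X ω = x} * Pr w {ω | A ω = b ∧ X ω = x} :=
      fun b => combine_real w (Ypo a m₁ m₂) _ _ _ _ (fun y => K1 y b)
    have I2mw :
        (∑ ω, Set.indicator {ω' | M₁po a₁ ω' = m₁ ∧ M₂po a₂ m₁ ω' = m₂ ∧ A ω' = a₁ ∧ X ω' = x}
            (fun ω' => w ω' * Ypo a m₁ m₂ ω') ω) * Pr w {ω | A ω = a₁ ∧ X ω = x}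
          = (∑ ω, Set.indicator {ω' | M₂po a₂ m₁ ω' = m₂ ∧ A ω' = a₁ ∧ X ω' = x}
            (fun ω' => w ω' * Ypo a m₁ m₂ ω') ω) * Pr w {ω | M₁ ω = m₁ ∧ A ω = a₁ ∧ X ω = x} :=
      combine_wt w (Ypo a m₁ m₂) _ _ _ _ (fun y => I2m m₁ y)
    have I2mp : ∀ m₁' : σ₁,
        Pr w {ω | M₁po a₁ ω = m₁' ∧ M₂po a₂ m₁ ω = m₂ ∧ A ω = a₁ ∧ X ω = x}
            * Pr w {ω | A ω = a₁ ∧ X ω = x}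
          = Pr w {ω | M₂po a₂ m₁ ω = m₂ ∧ A ω = a₁ ∧ X ω = x}
            * Pr w {ω | M₁ ω = m₁' ∧ A ω = a₁ ∧ X ω = x} :=
      fun m₁' => combine_real w (Ypo a m₁ m₂) _ _ _ _ (fun y => I2m m₁' y)
    have I2cw : ∀ b : Bool,
        (∑ ω, Set.indicator {ω' | M₁ ω' = m₁ ∧ M₂po a₂ m₁ ω' = m₂ ∧ A ω' = b ∧ X ω' = x}
            (fun ω' => w ω' * Ypo a m₁ m₂ ω') ω) * Pr w {ω | A ω = b ∧ X ω = x}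
          = (∑ ω, Set.indicator {ω' | M₂po a₂ m₁ ω' = m₂ ∧ A ω' = b ∧ X ω' = x}
            (fun ω' => w ω' * Ypo a m₁ m₂ ω') ω) * Pr w {ω | M₁ ω = m₁ ∧ A ω = b ∧ X ω = x} :=
      fun b => combine_wt w (Ypo a m₁ m₂) _ _ _ _ (fun y => I2c b m₁ y)
    have I2cp : ∀ b : Bool,
        Pr w {ω | M₁ ω = m₁ ∧ M₂po a₂ m₁ ω = m₂ ∧ A ω = b ∧ X ω = x}
            * Pr w {ω | A ω = b ∧ X ω = x}
          = Pr w {ω | M₂po a₂ m₁ ω = m₂ ∧ A ω = b ∧ X ω = x}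
            * Pr w {ω | M₁ ω = m₁ ∧ A ω = b ∧ X ω = x} :=
      fun b => combine_real w (Ypo a m₁ m₂) _ _ _ _ (fun y => I2c b m₁ y)
    have I3aw :
        (∑ ω, Set.indicator {ω' | M₁ ω' = m₁ ∧ M₂po a₂ m₁ ω' = m₂ ∧ A ω' = a ∧ X ω' = x}
            (fun ω' => w ω' * Ypo a m₁ m₂ ω') ω) * Pr w {ω | M₁ ω = m₁ ∧ A ω = a ∧ X ω = x}
          = (∑ ω, Set.indicator {ω' | M₁ ω' = m₁ ∧ A ω' = a ∧ X ω' = x}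
            (fun ω' => w ω' * Ypo a m₁ m₂ ω') ω)
            * Pr w {ω | M₁ ω = m₁ ∧ M₂po a₂ m₁ ω = m₂ ∧ A ω = a ∧ X ω = x} :=
      combine_wt w (Ypo a m₁ m₂) _ _ _ _ (fun y => I3a y)
    have I3bw :
        (∑ ω, Set.indicator {ω' | M₁ ω' = m₁ ∧ M₂ ω' = m₂ ∧ A ω' = a ∧ X ω' = x}
            (fun ω' => w ω' * Ypo a m₁ m₂ ω') ω) * Pr w {ω | M₁ ω = m₁ ∧ A ω = a ∧ X ω = x}
          = (∑ ω, Set.indicator {ω' | M₁ ω' = m₁ ∧ A ω' = a ∧ X ω' = x}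
            (fun ω' => w ω' * Ypo a m₁ m₂ ω') ω)
            * Pr w {ω | M₁ ω = m₁ ∧ M₂ ω = m₂ ∧ A ω = a ∧ X ω = x} :=
      combine_wt w (Ypo a m₁ m₂) _ _ _ _ (fun y => I3b y)
    -- cPr / cExp conversions
    have hcPr1 : cPr w {ω | M₁ ω = m₁} {ω | X ω = x ∧ A ω = a₁}
        = Pr w {ω | M₁ ω = m₁ ∧ A ω = a₁ ∧ X ω = x} / Pr w {ω | A ω = a₁ ∧ X ω = x} := by
      unfold cPr
      rw [show ({ω | M₁ ω = m₁} ∩ {ω | X ω = x ∧ A ω = a₁})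
            = {ω | M₁ ω = m₁ ∧ A ω = a₁ ∧ X ω = x} from by
          ext ω; simp only [Set.mem_inter_iff, Set.mem_setOf_eq]; tauto,
        show ({ω | X ω = x ∧ A ω = a₁} : Set Ω) = {ω | A ω = a₁ ∧ X ω = x} from by
          ext ω; simp only [Set.mem_setOf_eq]; tauto]
    have hcPr2 : cPr w {ω | M₂ ω = m₂} {ω | X ω = x ∧ A ω = a₂ ∧ M₁ ω = m₁}
        = Pr w {ω | M₁ ω = m₁ ∧ M₂ ω = m₂ ∧ A ω = a₂ ∧ X ω = x}
          / Pr w {ω | M₁ ω = m₁ ∧ A ω = a₂ ∧ X ω = x} := by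
      unfold cPr
      rw [show ({ω | M₂ ω = m₂} ∩ {ω | X ω = x ∧ A ω = a₂ ∧ M₁ ω = m₁})
            = {ω | M₁ ω = m₁ ∧ M₂ ω = m₂ ∧ A ω = a₂ ∧ X ω = x} from by
          ext ω; simp only [Set.mem_inter_iff, Set.mem_setOf_eq]; tauto,
        show ({ω | X ω = x ∧ A ω = a₂ ∧ M₁ ω = m₁} : Set Ω)
            = {ω | M₁ ω = m₁ ∧ A ω = a₂ ∧ X ω = x} from by
          ext ω; simp only [Set.mem_setOf_eq]; tauto]
    have hcExp : cExp w Y {ω | X ω = x ∧ A ω = a ∧ M₁ ω = m₁ ∧ M₂ ω = m₂}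
        = (∑ ω, Set.indicator {ω' | M₁ ω' = m₁ ∧ M₂ ω' = m₂ ∧ A ω' = a ∧ X ω' = x}
            (fun ω' => w ω' * Ypo a m₁ m₂ ω') ω)
          / Pr w {ω | M₁ ω = m₁ ∧ M₂ ω = m₂ ∧ A ω = a ∧ X ω = x} := by
      unfold cExp
      congr 1
      · refine Finset.sum_congr rfl fun ω _ => ?_
        by_cases hω : X ω = x ∧ A ω = a ∧ M₁ ω = m₁ ∧ M₂ ω = m₂
        · rw [Set.indicator_of_mem
              (show ω ∈ {ω' | X ω' = x ∧ A ω' = a ∧ M₁ ω' = m₁ ∧ M₂ ω' = m₂} from hω),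
            Set.indicator_of_mem
              (show ω ∈ {ω' | M₁ ω' = m₁ ∧ M₂ ω' = m₂ ∧ A ω' = a ∧ X ω' = x} from
                ⟨hω.2.2.1, hω.2.2.2, hω.2.1, hω.1⟩),
            hconsY ω a m₁ m₂ hω.2.1 hω.2.2.1 hω.2.2.2]
        · rw [Set.indicator_of_notMem
              (show ω ∉ {ω' | X ω' = x ∧ A ω' = a ∧ M₁ ω' = m₁ ∧ M₂ ω' = m₂} from hω),
            Set.indicator_of_notMem
              (show ω ∉ {ω' | M₁ ω' = m₁ ∧ M₂ ω' = m₂ ∧ A ω' = a ∧ X ω' = x} from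
                fun h => hω ⟨h.2.2.2, h.2.2.1, h.1, h.2.1⟩)]
      · exact congrArg (Pr w) (by
          ext ω; simp only [Set.mem_setOf_eq]; tauto)
    rw [hcExp, hcPr2, hcPr1]
    by_cases hk : Pr w {ω | X ω = x ∧ M₁ ω = m₁} = 0
    · -- degenerate: P(X = x, M₁ = m₁) = 0
      have z1 : Pr w {ω | M₁ ω = m₁ ∧ A ω = a₁ ∧ X ω = x} = 0 :=
        pr_zero_of_subset w hw hk (fun ω h => ⟨h.2.2, h.1⟩)
      have z2 : Pr w {ω | M₁po a₁ ω = m₁ ∧ A ω = a₁ ∧ X ω = x} = 0 := by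
        rw [cs1 a₁ m₁]; exact z1
      have z3 : Pr w {ω | M₁po a₁ ω = m₁ ∧ X ω = x} = 0 := by
        have h := K1p a₁
        rw [z2, zero_mul] at h
        rcases mul_eq_zero.mp h.symm with h' | h'
        · exact h'
        · exact absurd h' (hN a₁).ne'
      rw [z1, zero_div, mul_zero, zero_mul]
      exact indsum_zero w hw z3 (fun ω h => ⟨h.1, h.2.2⟩) _
    have hk' : 0 < Pr w {ω | X ω = x ∧ M₁ ω = m₁} :=
      lt_of_le_of_ne (pr_nonneg w hw _) (Ne.symm hk)
    have hc : ∀ b, 0 < Pr w {ω | M₁ ω = m₁ ∧ A ω = b ∧ X ω = x} := by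
      intro b
      have h := hposAM₁ b x m₁ hk'
      have e : Pr w {ω | M₁ ω = m₁ ∧ A ω = b ∧ X ω = x}
          = Pr w {ω | A ω = b ∧ X ω = x ∧ M₁ ω = m₁} :=
        congrArg (Pr w) (by ext ω; simp only [Set.mem_setOf_eq]; tauto)
      rw [e]; exact h
    by_cases hkm : Pr w {ω | X ω = x ∧ M₁ ω = m₁ ∧ M₂ ω = m₂} = 0
    · -- degenerate: P(X = x, M₁ = m₁, M₂ = m₂) = 0
      have zq2 : Pr w {ω | M₁ ω = m₁ ∧ M₂ ω = m₂ ∧ A ω = a₂ ∧ X ω = x} = 0 :=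
        pr_zero_of_subset w hw hkm (fun ω h => ⟨h.2.2.2, h.1, h.2.1⟩)
      have zq2' : Pr w {ω | M₁ ω = m₁ ∧ M₂po a₂ m₁ ω = m₂ ∧ A ω = a₂ ∧ X ω = x} = 0 := by
        rw [cs2 a₂]; exact zq2
      have zR2 : Pr w {ω | M₂po a₂ m₁ ω = m₂ ∧ A ω = a₂ ∧ X ω = x} = 0 := by
        have h := I2cp a₂
        rw [zq2', zero_mul] at h
        rcases mul_eq_zero.mp h.symm with h' | h'
        · exact h'
        · exact absurd h' (hc a₂).ne'
      have zp0 : Pr w {ω | M₂po a₂ m₁ ω = m₂ ∧ X ω = x} = 0 := by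
        have h := J1p a₂
        rw [zR2, zero_mul] at h
        rcases mul_eq_zero.mp h.symm with h' | h'
        · exact h'
        · exact absurd h' (hN a₂).ne'
      have zR1 : Pr w {ω | M₂po a₂ m₁ ω = m₂ ∧ A ω = a₁ ∧ X ω = x} = 0 := by
        have h := J1p a₁
        rw [zp0, zero_mul] at h
        rcases mul_eq_zero.mp h with h' | h'
        · exact h'
        · exact absurd h' hpx
      have zG1 : Pr w {ω | M₁po a₁ ω = m₁ ∧ M₂po a₂ m₁ ω = m₂ ∧ A ω = a₁ ∧ X ω = x} = 0 := by
        have h := I2mp m₁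
        rw [zR1, zero_mul] at h
        rcases mul_eq_zero.mp h with h' | h'
        · exact h'
        · exact absurd h' (hN a₁).ne'
      have zT : Pr w {ω | M₁po a₁ ω = m₁ ∧ M₂po a₂ m₁ ω = m₂ ∧ X ω = x} = 0 := by
        have h := I1p a₁
        rw [zG1, zero_mul] at h
        rcases mul_eq_zero.mp h.symm with h' | h'
        · exact h'
        · exact absurd h' (hN a₁).ne'
      rw [zq2, zero_div, mul_zero, zero_mul, zero_mul]
      exact indsum_zero w hw zT (fun ω h => h) _
    have hkm' : 0 < Pr w {ω | X ω = x ∧ M₁ ω = m₁ ∧ M₂ ω = m₂} :=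
      lt_of_le_of_ne (pr_nonneg w hw _) (Ne.symm hkm)
    have hq : ∀ b, 0 < Pr w {ω | M₁ ω = m₁ ∧ M₂ ω = m₂ ∧ A ω = b ∧ X ω = x} := by
      intro b
      have h := hposAM₂ b x m₁ m₂ hkm'
      have e : Pr w {ω | M₁ ω = m₁ ∧ M₂ ω = m₂ ∧ A ω = b ∧ X ω = x}
          = Pr w {ω | A ω = b ∧ X ω = x ∧ M₁ ω = m₁ ∧ M₂ ω = m₂} :=
        congrArg (Pr w) (by ext ω; simp only [Set.mem_setOf_eq]; tauto)
      rw [e]; exact h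
    -- main case
    have E9 :
        Pr w {ω | M₁ ω = m₁ ∧ M₂ ω = m₂ ∧ A ω = a₂ ∧ X ω = x}
            * Pr w {ω | A ω = a₂ ∧ X ω = x}
          = Pr w {ω | M₂po a₂ m₁ ω = m₂ ∧ A ω = a₂ ∧ X ω = x}
            * Pr w {ω | M₁ ω = m₁ ∧ A ω = a₂ ∧ X ω = x} := by
      rw [← cs2 a₂]; exact I2cp a₂
    exact final_algebra hpx' (hN a₁) (hN a) (hN a₂) (hc a₁) (hc a) (hc a₂) (hq a) (hq a₂)
      (I1w a₁) I2mw (J1w a₁) (J1w a) (I2cw a) I3aw I3bw (I2cp a) (J1p a) E9 (J1p a₂)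
  calc ∑ ω, w ω * Ypo a (M₁po a₁ ω) (M₂po a₂ (M₁po a₁ ω) ω) ω
      = ∑ ω, ∑ x : χ, ∑ m₁ : σ₁, ∑ m₂ : σ₂,
          Set.indicator {ω' | M₁po a₁ ω' = m₁ ∧ M₂po a₂ m₁ ω' = m₂ ∧ X ω' = x}
            (fun ω' => w ω' * Ypo a m₁ m₂ ω') ω :=
        (Finset.sum_congr rfl fun ω _ => (point ω).symm)
    _ = ∑ x : χ, ∑ ω, ∑ m₁ : σ₁, ∑ m₂ : σ₂,
          Set.indicator {ω' | M₁po a₁ ω' = m₁ ∧ M₂po a₂ m₁ ω' = m₂ ∧ X ω' = x}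
            (fun ω' => w ω' * Ypo a m₁ m₂ ω') ω := Finset.sum_comm
    _ = ∑ x : χ, ∑ m₁ : σ₁, ∑ ω, ∑ m₂ : σ₂,
          Set.indicator {ω' | M₁po a₁ ω' = m₁ ∧ M₂po a₂ m₁ ω' = m₂ ∧ X ω' = x}
            (fun ω' => w ω' * Ypo a m₁ m₂ ω') ω :=
        Finset.sum_congr rfl fun x _ => Finset.sum_comm
    _ = ∑ x : χ, ∑ m₁ : σ₁, ∑ m₂ : σ₂, ∑ ω,
          Set.indicator {ω' | M₁po a₁ ω' = m₁ ∧ M₂po a₂ m₁ ω' = m₂ ∧ X ω' = x}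
            (fun ω' => w ω' * Ypo a m₁ m₂ ω') ω :=
        Finset.sum_congr rfl fun x _ => Finset.sum_congr rfl fun m₁ _ => Finset.sum_comm
    _ = _ := by
        refine Finset.sum_congr rfl fun x _ => Finset.sum_congr rfl fun m₁ _ =>
          Finset.sum_congr rfl fun m₂ _ => key x m₁ m₂
end

section
/- Zero conditional mean of the k-th EIF component: with discrete X, A, M₁,...,M_K, Y satisfying positivity, define μ_K(X, M̄_K) = E[Y | X, a_{K+1}, M̄_K] and iteratively μ_k(X, M̄_k) = E[μ_{k+1}(X, M̄_{k+1}) | X, a_{k+1}, M̄_k]. Then for each k ∈ {1,...,K}, E[ 1{A = a_k}/p(a_k|X) · ∏_{j=1}^{k-1} [p(M_j|X, a_j, M̄_{j-1})/p(M_j|X, a_k, M̄_{j-1})] · (μ_k(X, M̄_k) − μ_{k-1}(X, M̄_{k-1})) | X, A, M̄_{k-1} ] = 0 almost surely. -/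
open Finset

variable {Ω : Type*}

/-- Iterated outcome regressions: `muIter w X A M Y a K j` equals `μ_{K-j}`, where
`μ_K(X, M̄_K) = E[Y | X, a_{K+1}, M̄_K]` and
`μ_k(X, M̄_k) = E[μ_{k+1}(X, M̄_{k+1}) | X, a_{k+1}, M̄_k]`. -/
noncomputable def muIter [Fintype Ω] {χ γ : Type*} (w : Ω → ℝ) (X : Ω → χ) (A : Ω → Bool)
    (M : ℕ → Ω → γ) (Y : Ω → ℝ) (a : ℕ → Bool) (K : ℕ) : ℕ → Ω → ℝ
  | 0, ω => cExp w Y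
      {ω' | X ω' = X ω ∧ A ω' = a (K + 1) ∧ ∀ i ∈ Finset.Icc 1 K, M i ω' = M i ω}
  | j + 1, ω => cExp w (muIter w X A M Y a K j)
      {ω' | X ω' = X ω ∧ A ω' = a (K - j) ∧ ∀ i ∈ Finset.Icc 1 (K - j - 1), M i ω' = M i ω}

section Aux

variable [Fintype Ω] {χ α γ : Type*}

lemma fProb_congr (w : Ω → ℝ) (X : Ω → χ) (A : Ω → α) (M : ℕ → Ω → γ)
    (j : ℕ) (b : α) {ω ω' : Ω} (h1 : M j ω' = M j ω) (h2 : X ω' = X ω)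
    (h3 : ∀ i ∈ Finset.Icc 1 (j - 1), M i ω' = M i ω) :
    fProb w X A M j b ω' = fProb w X A M j b ω := by
  unfold fProb
  have e1 : {ω'' : Ω | M j ω'' = M j ω'} = {ω'' | M j ω'' = M j ω} := by
    ext ω''; simp [h1]
  have e2 : {ω'' : Ω | X ω'' = X ω' ∧ A ω'' = b ∧ ∀ i ∈ Finset.Icc 1 (j - 1), M i ω'' = M i ω'}
      = {ω'' | X ω'' = X ω ∧ A ω'' = b ∧ ∀ i ∈ Finset.Icc 1 (j - 1), M i ω'' = M i ω} := by
    ext ω''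
    simp only [Set.mem_setOf_eq, h2]
    constructor <;> rintro ⟨ha, hb, hc⟩
    · exact ⟨ha, hb, fun i hi => (hc i hi).trans (h3 i hi)⟩
    · exact ⟨ha, hb, fun i hi => (hc i hi).trans (h3 i hi).symm⟩
  rw [e1, e2]

lemma piProb0_congr (w : Ω → ℝ) (X : Ω → χ) (A : Ω → α) (M : ℕ → Ω → γ)
    (b : α) {ω ω' : Ω} (h2 : X ω' = X ω) :
    piProb w X A M 0 b ω' = piProb w X A M 0 b ω := by
  unfold piProb
  congr 1
  ext ω''; simp [h2]

end Aux

/-- Zero conditional mean of the k-th component of the efficient influence function: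
the conditional expectation given (X, A, M̄_{k-1}) of
1{A=a_k}/p(a_k|X) · ∏_{j=1}^{k-1} [p(M_j|X,a_j,M̄_{j-1})/p(M_j|X,a_k,M̄_{j-1})]
· (μ_k(X,M̄_k) − μ_{k-1}(X,M̄_{k-1})) is zero almost surely; here μ_k is
`muIter … (K - k)` and μ_{k-1} is `muIter … (K - k + 1)`. -/
theorem eif_component_zero_cond_mean [Fintype Ω] {χ γ : Type*}
    (w : Ω → ℝ) (hw : ∀ ω, 0 ≤ w ω) (hw1 : ∑ ω, w ω = 1)
    (X : Ω → χ) (A : Ω → Bool) (M : ℕ → Ω → γ) (Y : Ω → ℝ)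
    (K : ℕ) (a : ℕ → Bool) (k : ℕ) (hk1 : 1 ≤ k) (hkK : k ≤ K)
    (hπ : ∀ j ≤ K, ∀ (b : Bool) (ω : Ω), 0 < piProb w X A M j b ω)
    (hf : ∀ j, 1 ≤ j → j ≤ K → ∀ (b : Bool) (ω : Ω), 0 < fProb w X A M j b ω)
    (ω : Ω) (hω : 0 < w ω) :
    cExp w
      (fun ω' => (if A ω' = a k then (1 : ℝ) else 0) / piProb w X A M 0 (a k) ω' *
        (∏ j ∈ Finset.Icc 1 (k - 1), fProb w X A M j (a j) ω' / fProb w X A M j (a k) ω') *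
        (muIter w X A M Y a K (K - k) ω' - muIter w X A M Y a K (K - k + 1) ω'))
      {ω' | X ω' = X ω ∧ A ω' = A ω ∧ ∀ i ∈ Finset.Icc 1 (k - 1), M i ω' = M i ω}
      = 0 := by
  classical
  set t : Set Ω :=
    {ω' | X ω' = X ω ∧ A ω' = A ω ∧ ∀ i ∈ Finset.Icc 1 (k - 1), M i ω' = M i ω} with ht
  have hωt : ω ∈ t := ⟨rfl, rfl, fun i _ => rfl⟩
  have hPrt : 0 < Pr w t := by
    refine Finset.sum_pos' (fun x _ => Set.indicator_nonneg (fun x _ => hw x) x)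
      ⟨ω, Finset.mem_univ ω, ?_⟩
    rwa [Set.indicator_of_mem hωt]
  rw [cExp]
  set F : Ω → ℝ := fun ω' =>
    (if A ω' = a k then (1 : ℝ) else 0) / piProb w X A M 0 (a k) ω' *
      (∏ j ∈ Finset.Icc 1 (k - 1), fProb w X A M j (a j) ω' / fProb w X A M j (a k) ω') *
      (muIter w X A M Y a K (K - k) ω' - muIter w X A M Y a K (K - k + 1) ω') with hF
  by_cases hA : A ω = a k
  · -- main case: A ω = a k
    set μ : Ω → ℝ := muIter w X A M Y a K (K - k) with hμ
    set m : ℝ := cExp w μ t with hm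
    set C : ℝ := 1 / piProb w X A M 0 (a k) ω *
      ∏ j ∈ Finset.Icc 1 (k - 1), fProb w X A M j (a j) ω / fProb w X A M j (a k) ω with hC
    have key : ∀ ω', Set.indicator t (fun ω'' => w ω'' * F ω'') ω'
        = C * (Set.indicator t (fun ω'' => w ω'' * μ ω'') ω' - m * Set.indicator t w ω') := by
      intro ω'
      by_cases h : ω' ∈ t
      · obtain ⟨hX', hA', hM'⟩ := id h
        have hAk : A ω' = a k := hA'.trans hA
        have hμ1 : muIter w X A M Y a K (K - k + 1) ω' = m := by
          have hdef : muIter w X A M Y a K (K - k + 1) ω' =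
              cExp w (muIter w X A M Y a K (K - k))
                {ω'' | X ω'' = X ω' ∧ A ω'' = a (K - (K - k)) ∧
                  ∀ i ∈ Finset.Icc 1 (K - (K - k) - 1), M i ω'' = M i ω'} := by
            rw [muIter]
          have hKk : K - (K - k) = k := Nat.sub_sub_self hkK
          rw [hdef]
          have hset : {ω'' | X ω'' = X ω' ∧ A ω'' = a (K - (K - k)) ∧
              ∀ i ∈ Finset.Icc 1 (K - (K - k) - 1), M i ω'' = M i ω'} = t := by
            rw [hKk]
            ext ω''
            simp only [Set.mem_setOf_eq, ht, hX', hA]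
            constructor <;> rintro ⟨ha, hb, hc⟩
            · exact ⟨ha, hb, fun i hi => (hc i hi).trans (hM' i hi)⟩
            · exact ⟨ha, hb, fun i hi => (hc i hi).trans (hM' i hi).symm⟩
          rw [hset, hm, hμ]
        have hπ' : piProb w X A M 0 (a k) ω' = piProb w X A M 0 (a k) ω :=
          piProb0_congr w X A M (a k) hX'
        have hprod : (∏ j ∈ Finset.Icc 1 (k - 1),
            fProb w X A M j (a j) ω' / fProb w X A M j (a k) ω')
            = ∏ j ∈ Finset.Icc 1 (k - 1),
              fProb w X A M j (a j) ω / fProb w X A M j (a k) ω := by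
          refine Finset.prod_congr rfl fun j hj => ?_
          have hj1 : ∀ i ∈ Finset.Icc 1 (j - 1), M i ω' = M i ω := by
            intro i hi
            rcases Finset.mem_Icc.mp hi with ⟨hi1, hi2⟩
            exact hM' i (Finset.mem_Icc.mpr
              ⟨hi1, hi2.trans (le_trans (Nat.sub_le j 1) (Finset.mem_Icc.mp hj).2)⟩)
          rw [fProb_congr w X A M j (a j) (hM' j hj) hX' hj1,
            fProb_congr w X A M j (a k) (hM' j hj) hX' hj1]
        rw [Set.indicator_of_mem h, Set.indicator_of_mem h, Set.indicator_of_mem h]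
        simp only [hF]
        rw [if_pos hAk, hμ1, hπ', hprod, hC]
        ring
      · simp [Set.indicator_of_notMem h]
    have hsum : (∑ ω', Set.indicator t (fun ω'' => w ω'' * F ω'') ω')
        = C * ((∑ ω', Set.indicator t (fun ω'' => w ω'' * μ ω'') ω') - m * Pr w t) := by
      rw [Finset.sum_congr rfl fun ω' _ => key ω', ← Finset.mul_sum,
        Finset.sum_sub_distrib, ← Finset.mul_sum, Pr]
    have hnum : (∑ ω', Set.indicator t (fun ω'' => w ω'' * μ ω'') ω') = m * Pr w t := by
      rw [hm, cExp]
      field_simp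
    rw [hsum, hnum]
    simp
  · -- A ω ≠ a k : the indicator vanishes on t
    have key : ∀ ω', Set.indicator t (fun ω'' => w ω'' * F ω'') ω' = 0 := by
      intro ω'
      by_cases h : ω' ∈ t
      · obtain ⟨hX', hA', hM'⟩ := id h
        have hne : ¬ (A ω' = a k) := fun hc => hA (hA'.symm.trans hc)
        rw [Set.indicator_of_mem h]
        simp only [hF]
        simp [hne]
      · simp [Set.indicator_of_notMem h]
    rw [Finset.sum_congr rfl fun ω' _ => key ω']
    simp
end
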